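/- Let C ⊆ D be compact subsets of ℝ² with C convex and with ∂D a rectifiable Jordan curve. Then the length of ∂C is at most the length of ∂D. -/

import Mathlib

/-!
The metric projection `p` onto the closed convex set `C` is `1`-Lipschitz, so it does not
increase `1`-dimensional Hausdorff measure, and it suffices to show `∂C ⊆ p '' ∂D`.
A point `z ∉ C` has the same projection as every point of the ray from `p z` through `z`;
this ray starts in `D` and leaves the bounded set `D`, so it crosses `∂D`. Hence
`p '' Cᶜ ⊆ p '' ∂D`, and every `x ∈ ∂C` is `p x`, a limit of such projections.
-/

open MeasureTheory InnerProductSpace Set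

theorem IsPreconnected.inter_frontier_nonempty {X : Type*} [TopologicalSpace X] {s t : Set X}
    (hs : IsPreconnected s) (hst : (s ∩ t).Nonempty) (hs't : (s \ t).Nonempty) :
    (s ∩ frontier t).Nonempty := by
  by_contra! hfr
  have hcover : s ⊆ interior t ∪ interior tᶜ := by
    intro x hx
    have hx' : x ∉ frontier t := fun h => (hfr.subset ⟨hx, h⟩).elim
    rw [interior_compl, mem_union, mem_compl_iff]
    by_contra! h
    exact hx' ⟨h.2, h.1⟩
  obtain ⟨x, hxs, hxt⟩ := hst
  obtain ⟨y, hys, hyt⟩ := hs't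
  obtain ⟨z, -, hzt, hzt'⟩ := hs _ _ isOpen_interior isOpen_interior hcover
    ⟨x, hxs, (hcover hxs).resolve_right fun h => interior_subset h hxt⟩
    ⟨y, hys, (hcover hys).resolve_left fun h => hyt (interior_subset h)⟩
  exact interior_subset hzt' (interior_subset hzt)

section RealInnerProductSpace

variable {F : Type*} [NormedAddCommGroup F] [InnerProductSpace ℝ F]

theorem exists_add_smul_mem_frontier_of_isBounded {D : Set F} {a v : F} (ha : a ∈ D)
    (hD : Bornology.IsBounded D) (hv : v ≠ 0) : ∃ t : ℝ, 0 ≤ t ∧ a + t • v ∈ frontier D := by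
  obtain ⟨r, hr⟩ := hD.subset_closedBall a
  have hr₀ : 0 ≤ r := Metric.nonempty_closedBall.mp ⟨a, hr ha⟩
  have hv₀ : 0 < ‖v‖ := norm_pos_iff.mpr hv
  set ray : ℝ → F := fun t => a + t • v
  have hconn : IsPreconnected (ray '' Ici 0) :=
    (convex_Ici 0).isPreconnected.image _ (by fun_prop)
  have hin : (ray '' Ici 0 ∩ D).Nonempty := ⟨a, ⟨0, self_mem_Ici, by simp [ray]⟩, ha⟩
  have hout : (ray '' Ici 0 \ D).Nonempty := by
    refine ⟨ray ((r + 1) / ‖v‖), ⟨_, mem_Ici.mpr (by positivity), rfl⟩, fun h => ?_⟩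
    have hdist : dist (ray ((r + 1) / ‖v‖)) a = r + 1 := by
      rw [dist_self_add_left, norm_smul, Real.norm_of_nonneg (by positivity)]
      field_simp
    linarith [Metric.mem_closedBall.mp (hr h)]
  obtain ⟨_, ⟨t, ht, rfl⟩, hfr⟩ := hconn.inter_frontier_nonempty hin hout
  exact ⟨t, ht, hfr⟩

theorem norm_sub_le_of_real_inner_sub_nonpos {u v a b : F} (ha : ⟪u - a, b - a⟫_ℝ ≤ 0)
    (hb : ⟪v - b, a - b⟫_ℝ ≤ 0) : ‖a - b‖ ≤ ‖u - v‖ := by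
  have hsplit : ⟪u - v, a - b⟫_ℝ = ⟪a - b, a - b⟫_ℝ - ⟪u - a, b - a⟫_ℝ - ⟪v - b, a - b⟫_ℝ := by
    simp only [inner_sub_left, inner_sub_right, real_inner_comm]
    ring
  have hsq : ‖a - b‖ * ‖a - b‖ ≤ ‖u - v‖ * ‖a - b‖ :=
    calc ‖a - b‖ * ‖a - b‖ = ⟪a - b, a - b⟫_ℝ := (real_inner_self_eq_norm_mul_norm _).symm
      _ ≤ ⟪u - v, a - b⟫_ℝ := by linarith
      _ ≤ ‖u - v‖ * ‖a - b‖ := real_inner_le_norm _ _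
  rcases (norm_nonneg (a - b)).eq_or_lt with h | h
  · exact h ▸ norm_nonneg _
  · exact le_of_mul_le_mul_right hsq h

/-- The variational inequality characterising the nearest-point map onto a closed convex set. -/
def IsProjectionOnto (K : Set F) (p : F → F) : Prop :=
  ∀ u, p u ∈ K ∧ ∀ w ∈ K, ⟪u - p u, w - p u⟫_ℝ ≤ 0

theorem exists_isProjectionOnto {K : Set F} (hne : K.Nonempty) (hK : IsComplete K)
    (hconv : Convex ℝ K) : ∃ p : F → F, IsProjectionOnto K p := by
  choose p hpK hpmin using exists_norm_eq_iInf_of_complete_convex hne hK hconv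
  exact ⟨p, fun u => ⟨hpK u, (norm_eq_iInf_iff_real_inner_le_zero hconv (hpK u)).mp (hpmin u)⟩⟩

namespace IsProjectionOnto

variable {K : Set F} {p : F → F}

theorem apply_eq (hp : IsProjectionOnto K p) {u v : F} (hv : v ∈ K)
    (huv : ∀ w ∈ K, ⟪u - v, w - v⟫_ℝ ≤ 0) : p u = v := by
  have := norm_sub_le_of_real_inner_sub_nonpos ((hp u).2 v hv) (huv _ (hp u).1)
  rwa [sub_self, norm_zero, norm_le_zero_iff, sub_eq_zero] at this

theorem apply_of_mem (hp : IsProjectionOnto K p) {x : F} (hx : x ∈ K) : p x = x :=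
  hp.apply_eq hx fun w _ => by simp

theorem apply_add_smul_sub (hp : IsProjectionOnto K p) (z : F) {t : ℝ} (ht : 0 ≤ t) :
    p (p z + t • (z - p z)) = p z := by
  refine hp.apply_eq (hp z).1 fun w hw => ?_
  rw [add_sub_cancel_left, real_inner_smul_left]
  exact mul_nonpos_of_nonneg_of_nonpos ht ((hp z).2 w hw)

theorem lipschitzWith_one (hp : IsProjectionOnto K p) : LipschitzWith 1 p :=
  LipschitzWith.of_dist_le_mul fun u v => by
    simpa only [NNReal.coe_one, one_mul, dist_eq_norm] using
      norm_sub_le_of_real_inner_sub_nonpos ((hp u).2 _ (hp v).1) ((hp v).2 _ (hp u).1)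

theorem image_compl_subset_image_frontier (hp : IsProjectionOnto K p) {D : Set F}
    (hKD : K ⊆ D) (hD : Bornology.IsBounded D) : p '' Kᶜ ⊆ p '' frontier D := by
  rintro _ ⟨z, hz, rfl⟩
  have hne : z - p z ≠ 0 := sub_ne_zero.mpr fun h => hz (h ▸ (hp z).1)
  obtain ⟨t, ht, hfr⟩ := exists_add_smul_mem_frontier_of_isBounded (hKD (hp z).1) hD hne
  exact ⟨_, hfr, hp.apply_add_smul_sub z ht⟩

theorem isClosed (hp : IsProjectionOnto K p) : IsClosed K := by
  have hfix : K = {x | p x = x} := ext fun x => ⟨hp.apply_of_mem, fun h => h ▸ (hp x).1⟩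
  exact hfix ▸ isClosed_eq hp.lipschitzWith_one.continuous continuous_id

theorem frontier_subset_image_frontier (hp : IsProjectionOnto K p) {D : Set F} (hKD : K ⊆ D)
    (hD : IsCompact D) : frontier K ⊆ p '' frontier D := by
  have hcont := hp.lipschitzWith_one.continuous
  have hclosed : IsClosed (p '' frontier D) :=
    ((hD.closure.of_isClosed_subset isClosed_frontier frontier_subset_closure).image
      hcont).isClosed
  intro x hx
  rw [frontier_eq_closure_inter_closure, hp.isClosed.closure_eq] at hx
  rw [← hp.apply_of_mem hx.1, ← hclosed.closure_eq]
  exact closure_mono (hp.image_compl_subset_image_frontier hKD hD.isBounded)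
    (image_closure_subset_closure_image hcont (mem_image_of_mem p hx.2))

end IsProjectionOnto

end RealInnerProductSpace

theorem boundary_length_monotone_general (C D : Set (EuclideanSpace ℝ (Fin 2)))
    (hCD : C ⊆ D) (hC : IsCompact C) (hD : IsCompact D) (hconv : Convex ℝ C) :
    μH[1] (frontier C) ≤ μH[1] (frontier D) := by
  rcases C.eq_empty_or_nonempty with rfl | hne
  · simp
  obtain ⟨p, hp⟩ := exists_isProjectionOnto hne hC.isComplete hconv
  calc μH[1] (frontier C) ≤ μH[1] (p '' frontier D) :=
        measure_mono (hp.frontier_subset_image_frontier hCD hD)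
    _ ≤ 1 ^ (1 : ℝ) * μH[1] (frontier D) :=
        hp.lipschitzWith_one.hausdorffMeasure_image_le zero_le_one _
    _ = μH[1] (frontier D) := by simp

/-- Let `C ⊆ D` be compact subsets of `ℝ²` with `C` convex and `∂D` a
rectifiable Jordan curve.  Then the length (one-dimensional Hausdorff measure) of `∂C` is
at most the length of `∂D`. -/
theorem boundary_length_monotone (C D : Set (EuclideanSpace ℝ (Fin 2)))
    (hCD : C ⊆ D) (hC : IsCompact C) (hD : IsCompact D) (hconv : Convex ℝ C)
    (γ : ℝ → EuclideanSpace ℝ (Fin 2))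
    (hγcont : ContinuousOn γ (Set.Icc 0 1))
    (hγinj : Set.InjOn γ (Set.Ico 0 1))
    (hγclosed : γ 0 = γ 1)
    (hγim : γ '' Set.Icc 0 1 = frontier D)
    (hγrect : eVariationOn γ (Set.Icc 0 1) ≠ ⊤) :
    μH[1] (frontier C) ≤ μH[1] (frontier D) :=
  boundary_length_monotone_general C D hCD hC hD hconv
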